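/- Let A be an m×n real matrix whose columns have ℓ2-norm 1, let s ∈ {1,…,n} with 2s−1 ≤ n−1, and assume μ₁(A, s−1) + μ₁(A, 2s−1) < 1. Let x ∈ ℝ^n, b = Ax + z with ‖Aᵀz‖_∞ ≤ η for some η ≥ 0, and let x̂ be a minimizer of ‖y‖₁ over all y ∈ ℝ^n with ‖Aᵀ(b − Ay)‖_∞ ≤ η (the Dantzig selector). Then ‖x̂ − x‖₂ ≤ [2√2·√s / (1 − μ₁(A,s−1) − μ₁(A,2s−1))]·η + [ √2·μ₁(A,2s−1) / (1 − μ₁(A,s−1) − μ₁(A,2s−1)) + 1 ]·(2‖x_{−max(s)}‖₁/√s). In particular, every s-sparse signal is stably recovered under the condition μ₁(s−1) + μ₁(2s−1) < 1. -/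

import Mathlib

open scoped Classical

/-- Cumulative coherence function μ₁(A, s). -/
noncomputable def mu1 {m n : ℕ} (A : Matrix (Fin m) (Fin n) ℝ) (s : ℕ) : ℝ :=
  sSup {t : ℝ | ∃ S : Finset (Fin n), S.card ≤ s ∧ ∃ i : Fin n, i ∉ S ∧
    t = ∑ j ∈ S, |∑ k : Fin m, A k i * A k j|}

/-!
Write `h = x̂ - x` and let `i` be an index where `|h i|` is largest. Both `x̂` and `x` are
feasible, so `‖AᵀA h‖∞ ≤ 2η`, and `ℓ₁`-minimality of `x̂` gives the cone condition
`‖h‖₁ ≤ 2‖h_S‖₁ + 2‖x_{Sᶜ}‖₁ ≤ 2s|h i| + 2‖x_{Sᶜ}‖₁`.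
As the columns are normalized, `h i = (AᵀA h) i - ∑_{j ≠ i} ⟨A_i, A_j⟩ h j`. Subadditivity of
`μ₁` gives the linear majorant `μ₁(k) ≤ μ₁(s-1) + k μ₁(2s-1)/(2s-1)`, and slicing `|h|` into
level sets turns it into
`∑_{j ≠ i} |⟨A_i, A_j⟩| |h j| ≤ μ₁(s-1) |h i| + μ₁(2s-1)/(2s-1) ∑_{j ≠ i} |h j|`.
With the cone condition this bounds `‖h‖∞`, and `‖h‖₂² ≤ ‖h‖∞ ‖h‖₁` finishes.
-/

open Finset Matrix

theorem Subadditive.apply_le_add_div_mul {u : ℕ → ℝ} (hu : Subadditive u) (hmono : Monotone u)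
    (hnonneg : ∀ k, 0 ≤ u k) {t p : ℕ} (hp : 0 < p) (hpt : p ≤ 2 * t + 1) (k : ℕ) :
    u k ≤ u t + u p / p * k := by
  have hp' : (0 : ℝ) < p := by exact_mod_cast hp
  have hr : k % p < p := Nat.mod_lt k hp
  -- the remainder costs at most `min (u p) (2 * u t) ≤ u t + u p / 2`
  have hrem : u (k % p) ≤ u t + u p / p * (k % p : ℕ) := by
    rcases le_or_gt (k % p) t with hrt | htr
    · have : 0 ≤ u p / p * (k % p : ℕ) := by have := hnonneg p; positivity
      linarith [hmono hrt]
    · have h1 : u (k % p) ≤ u p := hmono hr.le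
      have h2 : u (k % p) ≤ u t + u t := (hmono (show k % p ≤ t + t by omega)).trans (hu t t)
      have h3 : (p : ℝ) ≤ 2 * (k % p : ℕ) := by exact_mod_cast (show p ≤ 2 * (k % p) by omega)
      have h4 : u p / 2 ≤ u p / p * (k % p : ℕ) := by
        rw [div_mul_eq_mul_div, le_div_iff₀ hp']
        nlinarith [hnonneg p]
      linarith
  have hk : (k : ℝ) = (k / p : ℕ) * p + (k % p : ℕ) := by
    exact_mod_cast (Nat.div_add_mod' k p).symm
  calc u k = u (k / p * p + k % p) := by rw [Nat.div_add_mod']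
    _ ≤ (k / p : ℕ) * u p + u (k % p) := hu.apply_mul_add_le _ _ _
    _ ≤ u t + u p / p * k := by
      have : (k / p : ℕ) * u p = u p / p * ((k / p : ℕ) * p) := by field_simp
      rw [hk]
      linarith

theorem Finset.sum_mul_le_of_forall_subset_sum_le {ι : Type*} [DecidableEq ι] {a γ : ℝ}
    (ha : 0 ≤ a) (T : Finset ι) (w : ι → ℝ) (hw : ∀ U ⊆ T, ∑ j ∈ U, w j ≤ a + γ * #U)
    (f : ι → ℝ) {M : ℝ} (hM : 0 ≤ M) (hf : ∀ j ∈ T, 0 ≤ f j ∧ f j ≤ M) :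
    ∑ j ∈ T, w j * f j ≤ a * M + γ * ∑ j ∈ T, f j := by
  induction T using Finset.strongInduction generalizing f M with
  | H T ih =>
  rcases T.eq_empty_or_nonempty with rfl | hT
  · simpa using mul_nonneg ha hM
  -- peel off the constant layer `c = min f`, which vanishes at a minimiser `j₀`
  obtain ⟨j₀, hj₀, hmin⟩ := T.exists_min_image f hT
  set c := f j₀
  have hc : 0 ≤ c := (hf j₀ hj₀).1
  have hrest := ih (T.erase j₀) (erase_ssubset hj₀)
    (fun U hU => hw U (hU.trans (erase_subset _ _))) (fun j => f j - c)
    (sub_nonneg.2 (hf j₀ hj₀).2)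
    fun j hj => ⟨sub_nonneg.2 (hmin j (mem_of_mem_erase hj)),
      sub_le_sub_right (hf j (mem_of_mem_erase hj)).2 c⟩
  rw [sum_erase _ (by simp [c]), sum_erase _ (by simp [c]), sum_sub_distrib, sum_const,
    nsmul_eq_mul] at hrest
  have hlayer := mul_le_mul_of_nonneg_left (hw T subset_rfl) hc
  calc ∑ j ∈ T, w j * f j = ∑ j ∈ T, w j * (f j - c) + c * ∑ j ∈ T, w j := by
        rw [mul_sum, ← sum_add_distrib]
        exact sum_congr rfl fun j _ => by ring
    _ ≤ a * M + γ * ∑ j ∈ T, f j := by linear_combination hrest + hlayer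

theorem abs_le_abs_mulVec_add_sum_erase {ι : Type*} [Fintype ι] [DecidableEq ι]
    (G : Matrix ι ι ℝ) (v : ι → ℝ) {i : ι} (hG : G i i = 1) :
    |v i| ≤ |(G *ᵥ v) i| + ∑ j ∈ univ.erase i, |G i j| * |v j| := by
  have hsplit : (G *ᵥ v) i = v i + ∑ j ∈ univ.erase i, G i j * v j := by
    rw [Matrix.mulVec, dotProduct, ← add_sum_erase _ _ (mem_univ i), hG, one_mul]
  calc |v i| = |(G *ᵥ v) i - ∑ j ∈ univ.erase i, G i j * v j| := by
        rw [hsplit, add_sub_cancel_right]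
    _ ≤ |(G *ᵥ v) i| + |∑ j ∈ univ.erase i, G i j * v j| := abs_sub _ _
    _ ≤ |(G *ᵥ v) i| + ∑ j ∈ univ.erase i, |G i j| * |v j| := by
        grw [abs_sum_le_sum_abs]
        simp only [abs_mul, le_refl]

theorem sum_abs_sub_le_of_sum_abs_le {ι : Type*} [Fintype ι] [DecidableEq ι] {x y : ι → ℝ}
    (hxy : ∑ i, |y i| ≤ ∑ i, |x i|) (S : Finset ι) :
    ∑ i, |y i - x i| ≤ 2 * ∑ i ∈ S, |y i - x i| + 2 * ∑ i ∈ Sᶜ, |x i| := by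
  have hS : ∑ i ∈ S, |x i| ≤ ∑ i ∈ S, |y i| + ∑ i ∈ S, |y i - x i| := by
    rw [← sum_add_distrib]
    exact sum_le_sum fun i _ => by
      linarith [abs_sub_abs_le_abs_sub (x i) (y i), abs_sub_comm (x i) (y i)]
  have hSc : ∑ i ∈ Sᶜ, |y i - x i| ≤ ∑ i ∈ Sᶜ, |y i| + ∑ i ∈ Sᶜ, |x i| := by
    rw [← sum_add_distrib]
    exact sum_le_sum fun i _ => abs_sub _ _
  rw [← sum_add_sum_compl S (fun i => |y i|), ← sum_add_sum_compl S (fun i => |x i|)] at hxy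
  rw [← sum_add_sum_compl S]
  linarith

theorem abs_transpose_mul_mulVec_sub_le {ι κ : Type*} [Fintype ι] [Fintype κ] (A : Matrix κ ι ℝ)
    {η : ℝ} {x xh : ι → ℝ} {z b : κ → ℝ} (hb : b = A *ᵥ x + z)
    (hz : ∀ i, |(Aᵀ *ᵥ z) i| ≤ η) (hfeas : ∀ i, |(Aᵀ *ᵥ (b - A *ᵥ xh)) i| ≤ η) (i : ι) :
    |((Aᵀ * A) *ᵥ (xh - x)) i| ≤ 2 * η := by
  have hres : (Aᵀ * A) *ᵥ (xh - x) = Aᵀ *ᵥ z - Aᵀ *ᵥ (b - A *ᵥ xh) := by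
    rw [← Matrix.mulVec_mulVec, ← Matrix.mulVec_sub, hb, Matrix.mulVec_sub]
    congr 1
    abel
  rw [hres, Pi.sub_apply]
  linarith [abs_sub ((Aᵀ *ᵥ z) i) ((Aᵀ *ᵥ (b - A *ᵥ xh)) i), hz i, hfeas i]

theorem sum_sq_le_mul_sum_abs {ι : Type*} [Fintype ι] {v : ι → ℝ} {M : ℝ}
    (hM : ∀ j, |v j| ≤ M) : ∑ j, v j ^ 2 ≤ M * ∑ j, |v j| := by
  rw [mul_sum]
  exact sum_le_sum fun j _ => by
    rw [← sq_abs, sq]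
    exact mul_le_mul_of_nonneg_right (hM j) (abs_nonneg _)

theorem sqrt_le_of_le_mul {X M ε s : ℝ} (hM : 0 ≤ M) (hε : 0 ≤ ε) (hs : 0 < s)
    (hX : X ≤ M * (2 * s * M + 2 * ε)) :
    √X ≤ √2 * √s * M + 2 * ε / √s := by
  have h2 : 1 ≤ √2 := Real.one_le_sqrt.2 (by norm_num)
  have hs' : 0 < √s := Real.sqrt_pos.2 hs
  rw [Real.sqrt_le_left (by positivity)]
  calc X ≤ 2 * s * M ^ 2 + 2 * (M * ε) := hX.trans_eq (by ring)
    _ ≤ (√2 * √s * M + 2 * ε / √s) ^ 2 := by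
      have e : (√2 * √s * M + 2 * ε / √s) ^ 2
          = 2 * s * M ^ 2 + 4 * √2 * M * ε + 4 * ε ^ 2 / s := by
        rw [add_sq, mul_pow, mul_pow, div_pow, Real.sq_sqrt (by norm_num), Real.sq_sqrt hs.le]
        field_simp
        ring
      rw [e]
      have : M * ε ≤ √2 * M * ε := by
        rw [mul_assoc]
        exact le_mul_of_one_le_left (mul_nonneg hM hε) h2
      have : 0 ≤ 4 * ε ^ 2 / s := by positivity
      linarith [mul_nonneg hM hε]

section Coherence

variable {m n : ℕ} (A : Matrix (Fin m) (Fin n) ℝ)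

theorem mu1_nonneg (k : ℕ) : 0 ≤ mu1 A k :=
  Real.sSup_nonneg <| by
    rintro t ⟨U, -, i, -, rfl⟩
    positivity

theorem sum_abs_le_mu1 {k : ℕ} {U : Finset (Fin n)} (hU : #U ≤ k) {i : Fin n} (hi : i ∉ U) :
    ∑ j ∈ U, |∑ l, A l i * A l j| ≤ mu1 A k := by
  refine le_csSup ⟨∑ i, ∑ j, |∑ l, A l i * A l j|, ?_⟩ ⟨U, hU, i, hi, rfl⟩
  rintro t ⟨V, -, i', -, rfl⟩
  calc ∑ j ∈ V, |∑ l, A l i' * A l j| ≤ ∑ j, |∑ l, A l i' * A l j| :=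
        sum_le_sum_of_subset_of_nonneg (subset_univ V) fun _ _ _ => abs_nonneg _
    _ ≤ ∑ i, ∑ j, |∑ l, A l i * A l j| :=
        single_le_sum (f := fun i => ∑ j, |∑ l, A l i * A l j|)
          (fun _ _ => sum_nonneg fun _ _ => abs_nonneg _) (mem_univ i')

theorem mu1_le {k : ℕ} {c : ℝ} (hc : 0 ≤ c)
    (h : ∀ U : Finset (Fin n), #U ≤ k → ∀ i ∉ U, ∑ j ∈ U, |∑ l, A l i * A l j| ≤ c) :
    mu1 A k ≤ c :=
  Real.sSup_le (by rintro t ⟨U, hU, i, hi, rfl⟩; exact h U hU i hi) hc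

theorem mu1_mono : Monotone (mu1 A) := fun _ l hkl =>
  mu1_le A (mu1_nonneg A l) fun _ hU _ hi => sum_abs_le_mu1 A (hU.trans hkl) hi

theorem subadditive_mu1 : Subadditive (mu1 A) := by
  intro k l
  refine mu1_le A (add_nonneg (mu1_nonneg A k) (mu1_nonneg A l)) fun U hU i hi => ?_
  obtain ⟨V, hVU, hV⟩ := exists_subset_card_eq (min_le_right k #U)
  rw [← sum_sdiff hVU, add_comm]
  exact add_le_add (sum_abs_le_mu1 A (hV.trans_le (min_le_left _ _)) fun h => hi (hVU h))
    (sum_abs_le_mu1 A (by rw [card_sdiff_of_subset hVU]; omega) fun h => hi (sdiff_subset h))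

theorem abs_le_mu1_mul_add (hA : ∀ j, ∑ k, A k j ^ 2 = 1) {s : ℕ} (hs : 1 ≤ s)
    (v : Fin n → ℝ) {i : Fin n} (hi : ∀ j, |v j| ≤ |v i|) :
    |v i| ≤ |((Aᵀ * A) *ᵥ v) i| + mu1 A (s - 1) * |v i|
      + mu1 A (2 * s - 1) / (2 * s - 1 : ℕ) * ∑ j ∈ univ.erase i, |v j| := by
  have hG : (Aᵀ * A) i i = 1 := by simpa [mul_apply, sq] using hA i
  have hw : ∀ U ⊆ univ.erase i, ∑ j ∈ U, |(Aᵀ * A) i j|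
      ≤ mu1 A (s - 1) + mu1 A (2 * s - 1) / (2 * s - 1 : ℕ) * #U := fun U hU =>
    (sum_abs_le_mu1 A le_rfl fun h => by simpa using hU h).trans
      ((subadditive_mu1 A).apply_le_add_div_mul (mu1_mono A) (mu1_nonneg A) (by omega)
        (by omega) _)
  have hsum := sum_mul_le_of_forall_subset_sum_le (mu1_nonneg A _) _ _ hw (fun j => |v j|)
    (abs_nonneg (v i)) fun j _ => ⟨abs_nonneg _, hi j⟩
  linarith [abs_le_abs_mulVec_add_sum_erase (Aᵀ * A) v hG]

theorem one_sub_mu1_mul_abs_le (hA : ∀ j, ∑ k, A k j ^ 2 = 1) {s : ℕ} (hs : 1 ≤ s)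
    (v : Fin n → ℝ) {i : Fin n} (hi : ∀ j, |v j| ≤ |v i|) {ε : ℝ} (hε : 0 ≤ ε)
    (hl1 : ∑ j, |v j| ≤ 2 * s * |v i| + 2 * ε) :
    (1 - mu1 A (s - 1) - mu1 A (2 * s - 1)) * |v i|
      ≤ |((Aᵀ * A) *ᵥ v) i| + 2 * mu1 A (2 * s - 1) / s * ε := by
  set B := mu1 A (2 * s - 1)
  have hp : (s : ℝ) ≤ (2 * s - 1 : ℕ) := by exact_mod_cast (by omega : s ≤ 2 * s - 1)
  have hp0 : ((2 * s - 1 : ℕ) : ℝ) ≠ 0 := by norm_cast; omega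
  have hrest : ∑ j ∈ univ.erase i, |v j| ≤ (2 * s - 1 : ℕ) * |v i| + 2 * ε := by
    rw [← add_sum_erase _ _ (mem_univ i)] at hl1
    push_cast [Nat.cast_sub (by omega : 1 ≤ 2 * s)]
    linarith
  have hB : 0 ≤ B := mu1_nonneg A _
  have htail : B / (2 * s - 1 : ℕ) * ∑ j ∈ univ.erase i, |v j| ≤ B * |v i| + 2 * B / s * ε :=
    calc _ ≤ B / (2 * s - 1 : ℕ) * ((2 * s - 1 : ℕ) * |v i| + 2 * ε) := by gcongr
      _ = B * |v i| + 2 * ε * (B / (2 * s - 1 : ℕ)) := by field_simp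
      _ ≤ B * |v i| + 2 * ε * (B / s) := by gcongr
      _ = B * |v i| + 2 * B / s * ε := by ring
  linarith [abs_le_mu1_mul_add A hA hs v hi]

theorem sqrt_sum_sq_le_of_cone (hA : ∀ j, ∑ k, A k j ^ 2 = 1) {s : ℕ} (hs : 1 ≤ s)
    (hcond : mu1 A (s - 1) + mu1 A (2 * s - 1) < 1) {η : ℝ} (v : Fin n → ℝ)
    (hG : ∀ i, |((Aᵀ * A) *ᵥ v) i| ≤ 2 * η) (S : Finset (Fin n)) (hS : #S = s) {ε : ℝ}
    (hε : 0 ≤ ε) (hcone : ∑ j, |v j| ≤ 2 * ∑ j ∈ S, |v j| + 2 * ε) :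
    √(∑ j, v j ^ 2) ≤
      2 * √2 * √s / (1 - mu1 A (s - 1) - mu1 A (2 * s - 1)) * η +
      (√2 * mu1 A (2 * s - 1) / (1 - mu1 A (s - 1) - mu1 A (2 * s - 1)) + 1) * (2 * ε / √s) := by
  set a := mu1 A (s - 1)
  set B := mu1 A (2 * s - 1)
  obtain ⟨j₀, -⟩ : S.Nonempty := card_pos.1 (by omega)
  obtain ⟨i, -, hi⟩ := exists_max_image univ (fun j => |v j|) ⟨j₀, mem_univ _⟩
  replace hi : ∀ j, |v j| ≤ |v i| := fun j => hi j (mem_univ j)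
  have hl1 : ∑ j, |v j| ≤ 2 * s * |v i| + 2 * ε := by
    have : ∑ j ∈ S, |v j| ≤ s * |v i| := by
      simpa [hS] using sum_le_card_nsmul S _ _ fun j _ => hi j
    linarith
  have hmax : (1 - a - B) * |v i| ≤ 2 * η + 2 * B / s * ε := by
    linarith [one_sub_mu1_mul_abs_le A hA hs v hi hε hl1, hG i]
  calc √(∑ j, v j ^ 2) ≤ √2 * √s * |v i| + 2 * ε / √s :=
        sqrt_le_of_le_mul (abs_nonneg _) hε (by positivity)
          ((sum_sq_le_mul_sum_abs hi).trans (by gcongr))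
    _ ≤ √2 * √s * ((2 * η + 2 * B / s * ε) / (1 - a - B)) + 2 * ε / √s := by
        gcongr
        rwa [le_div_iff₀ (by linarith), mul_comm]
    _ = _ := by
        field_simp
        rw [Real.sq_sqrt (Nat.cast_nonneg s)]
        ring

end Coherence

-- With `S` the indices of the `s` largest entries of `x`, `∑ j ∈ Sᶜ, |x j| = ‖x_{−max(s)}‖₁`.
theorem stmt17_general {m n : ℕ} (A : Matrix (Fin m) (Fin n) ℝ)
    (hA : ∀ j, ∑ k, (A k j) ^ 2 = 1)
    (s : ℕ) (hs1 : 1 ≤ s)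
    (hcond : mu1 A (s - 1) + mu1 A (2 * s - 1) < 1)
    (η : ℝ)
    (x : Fin n → ℝ) (z : Fin m → ℝ) (b : Fin m → ℝ)
    (hb : b = A.mulVec x + z)
    (hz : ∀ i, |A.transpose.mulVec z i| ≤ η)
    (xh : Fin n → ℝ)
    (hfeas : ∀ i, |A.transpose.mulVec (b - A.mulVec xh) i| ≤ η)
    (hmin : ∀ y : Fin n → ℝ, (∀ i, |A.transpose.mulVec (b - A.mulVec y) i| ≤ η) →
      ∑ i, |xh i| ≤ ∑ i, |y i|)
    (S : Finset (Fin n)) (hScard : S.card = s) :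
    Real.sqrt (∑ i, (xh i - x i) ^ 2) ≤
      2 * Real.sqrt 2 * Real.sqrt s / (1 - mu1 A (s - 1) - mu1 A (2 * s - 1)) * η +
      (Real.sqrt 2 * mu1 A (2 * s - 1) / (1 - mu1 A (s - 1) - mu1 A (2 * s - 1)) + 1) *
        (2 * (∑ j ∈ Sᶜ, |x j|) / Real.sqrt s) := by
  have hx : ∀ i, |(Aᵀ *ᵥ (b - A *ᵥ x)) i| ≤ η := by simpa [hb] using hz
  exact sqrt_sum_sq_le_of_cone A hA hs1 hcond (xh - x)
    (abs_transpose_mul_mulVec_sub_le A hb hz hfeas) S hScard (sum_nonneg fun _ _ => abs_nonneg _) (sum_abs_sub_le_of_sum_abs_le (hmin x hx) S)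

/-- Error bound for the Dantzig selector under the cumulative coherence condition
`μ₁(s−1) + μ₁(2s−1) < 1` (the case `a = s`, `C_{a,s} = 1`).
Here `S` is any set of indices of the `s` largest-magnitude entries of `x`, so that
`‖x_{−max(s)}‖₁ = ∑_{j ∉ S} |x j|`; in particular every `s`-sparse signal is stably
recovered under `μ₁(s−1) + μ₁(2s−1) < 1`. -/
theorem stmt17 {m n : ℕ} (A : Matrix (Fin m) (Fin n) ℝ)
    (hA : ∀ j, ∑ k, (A k j) ^ 2 = 1)
    (s : ℕ) (hs1 : 1 ≤ s) (hsn : 2 * s - 1 ≤ n - 1)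
    (hcond : mu1 A (s - 1) + mu1 A (2 * s - 1) < 1)
    (η : ℝ) (hη : 0 ≤ η)
    (x : Fin n → ℝ) (z : Fin m → ℝ) (b : Fin m → ℝ)
    (hb : b = A.mulVec x + z)
    (hz : ∀ i, |A.transpose.mulVec z i| ≤ η)
    (xh : Fin n → ℝ)
    (hfeas : ∀ i, |A.transpose.mulVec (b - A.mulVec xh) i| ≤ η)
    (hmin : ∀ y : Fin n → ℝ, (∀ i, |A.transpose.mulVec (b - A.mulVec y) i| ≤ η) →
      ∑ i, |xh i| ≤ ∑ i, |y i|)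
    (S : Finset (Fin n)) (hScard : S.card = s)
    (hSmax : ∀ i ∈ S, ∀ j ∉ S, |x j| ≤ |x i|) :
    Real.sqrt (∑ i, (xh i - x i) ^ 2) ≤
      2 * Real.sqrt 2 * Real.sqrt s / (1 - mu1 A (s - 1) - mu1 A (2 * s - 1)) * η +
      (Real.sqrt 2 * mu1 A (2 * s - 1) / (1 - mu1 A (s - 1) - mu1 A (2 * s - 1)) + 1) *
        (2 * (∑ j ∈ Sᶜ, |x j|) / Real.sqrt s) :=
  stmt17_general A hA s hs1 hcond η x z b hb hz xh hfeas hmin S hScard
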